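/- For each n ≥ 1, let ε_0, …, ε_n be independent random signs, each equal to +1 or −1 with probability 1/2, let P_n(x) = Σ_{m=0}^n C(n,m) ε_m cos(mx), let M_n = sup_{0 ≤ x ≤ 2π} |P_n(x)|, and let R_n = Σ_{m=0}^n C(n,m)². Then for any real λ > 0 and any θ with 0 < θ < 1, the expectation E[ e^{θ λ M_n} ] is at most (4π/(1−θ)) · n · e^{(1/2)λ² R_n}. -/

import Mathlib

open MeasureTheory Finset Filter Real

/-- The uniform probability measure on sign vectors, encoded as `Fin (n+1) → Bool`. -/
noncomputable def signs (n : ℕ) : Measure (Fin (n+1) → Bool) :=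
  (PMF.uniformOfFintype (Fin (n+1) → Bool)).toMeasure

/-- The `m`-th random sign: `+1` or `-1`, each with probability `1/2`,
independent across coordinates under `signs n`. -/
noncomputable def eps {n : ℕ} (ω : Fin (n+1) → Bool) (m : Fin (n+1)) : ℝ :=
  if ω m then 1 else -1

/-- The random trigonometric polynomial `P_n(x) = ∑_{m=0}^n C(n,m) ε_m cos (m x)`. -/
noncomputable def P (n : ℕ) (ω : Fin (n+1) → Bool) (x : ℝ) : ℝ :=
  ∑ m : Fin (n+1), (n.choose m : ℝ) * eps ω m * Real.cos (m * x)

/-- `M_n = sup_{0 ≤ x ≤ 2π} |P_n(x)|`. -/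
noncomputable def M (n : ℕ) (ω : Fin (n+1) → Bool) : ℝ :=
  ⨆ x : Set.Icc (0:ℝ) (2*π), |P n ω x|

/-- `R_n = ∑_{m=0}^n C(n,m)²`. -/
noncomputable def R (n : ℕ) : ℝ :=
  ∑ m ∈ range (n+1), (n.choose m : ℝ)^2

/-! For each choice of signs, `P_n` is a trigonometric polynomial of degree `n`, so Bernstein's
inequality `|P_n'| ≤ n M_n` keeps `|P_n| ≥ θ M_n` on an interval of length `(1 - θ) / n` starting
at a maximum point; hence `e^{θλM_n} ≤ n / (1 - θ) ∫_0^{2π} e^{λ|P_n|}`. Averaging over the signs,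
`E e^{t P_n(x)} = ∏_m cosh (t C(n,m) cos mx) ≤ e^{t² R_n / 2}` for `t = ±λ` bounds the integrand
by `2 e^{λ² R_n / 2}`.

Bernstein's inequality is proved by counting zeros: a nonzero trigonometric polynomial of
degree `N` is `e^{-iNx}` times a polynomial of degree `2N` in `e^{ix}`, so it has at most `2N`
zeros in a period. -/

noncomputable def trigPoly (N : ℕ) (a b : Fin (N + 1) → ℝ) (x : ℝ) : ℝ :=
  ∑ m : Fin (N + 1), (a m * cos (m * x) + b m * sin (m * x))

section TrigPoly

variable {N : ℕ} (a b : Fin (N + 1) → ℝ)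

open Polynomial

theorem hasDerivAt_trigPoly (x : ℝ) :
    HasDerivAt (trigPoly N a b) (trigPoly N (fun m => m * b m) (fun m => -(m * a m)) x) x := by
  refine HasDerivAt.fun_sum fun m _ => ?_
  have hlin : HasDerivAt (fun y : ℝ => (m : ℝ) * y) m x := by
    simpa using (hasDerivAt_id x).const_mul (m : ℝ)
  have hcos := ((hasDerivAt_cos (m * x)).comp x hlin).const_mul (a m)
  have hsin := ((hasDerivAt_sin (m * x)).comp x hlin).const_mul (b m)
  exact (hcos.add hsin).congr_deriv (by ring)

theorem differentiable_trigPoly : Differentiable ℝ (trigPoly N a b) :=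
  fun x => (hasDerivAt_trigPoly a b x).differentiableAt

theorem trigPoly_periodic : Function.Periodic (trigPoly N a b) (2 * π) := fun x => by
  simp only [trigPoly, mul_add, cos_add_nat_mul_two_pi, sin_add_nat_mul_two_pi]

theorem trigPoly_neg : trigPoly N (-a) (-b) = -trigPoly N a b := by
  ext x
  simp only [trigPoly, Pi.neg_apply, ← sum_neg_distrib]
  exact sum_congr rfl fun m _ => by ring

theorem trigPoly_sub_single (p q x : ℝ) :
    trigPoly N (a - Pi.single (Fin.last N) p) (b - Pi.single (Fin.last N) q) x
      = trigPoly N a b x - (p * cos (N * x) + q * sin (N * x)) := by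
  have hlast : ∑ m : Fin (N + 1),
      ((Pi.single (Fin.last N) p : Fin (N + 1) → ℝ) m * cos (m * x)
        + (Pi.single (Fin.last N) q : Fin (N + 1) → ℝ) m * sin (m * x))
      = p * cos (N * x) + q * sin (N * x) := by
    simp [Pi.single_apply, sum_add_distrib]
  rw [← hlast, trigPoly, trigPoly, ← sum_sub_distrib]
  exact sum_congr rfl fun m _ => by simp only [Pi.sub_apply]; ring

noncomputable def trigPoly.toPolynomial (N : ℕ) (a b : Fin (N + 1) → ℝ) : ℂ[X] :=
  ∑ m : Fin (N + 1), (C ((a m - b m * Complex.I) / 2) * X ^ (N + m)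
    + C ((a m + b m * Complex.I) / 2) * X ^ (N - m))

theorem trigPoly.natDegree_toPolynomial_le : (trigPoly.toPolynomial N a b).natDegree ≤ 2 * N := by
  refine natDegree_sum_le_of_forall_le _ _ fun m _ => ?_
  refine (natDegree_add_le _ _).trans (max_le ?_ ?_) <;>
  · refine (natDegree_C_mul_le _ _).trans ?_
    rw [natDegree_X_pow]
    omega

theorem trigPoly.eval_toPolynomial (x : ℝ) :
    (trigPoly.toPolynomial N a b).eval (Complex.exp (x * Complex.I))
      = Complex.exp (N * x * Complex.I) * trigPoly N a b x := by
  rw [trigPoly.toPolynomial, eval_finsetSum, trigPoly]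
  push_cast
  rw [mul_sum]
  refine sum_congr rfl fun m _ => ?_
  have hm : (m : ℕ) ≤ N := Nat.lt_succ_iff.mp m.2
  simp only [eval_add, eval_mul, eval_C, eval_pow,
    eval_X, ← Complex.exp_nat_mul]
  have hplus : ((N + m : ℕ) : ℂ) * (x * Complex.I) = N * x * Complex.I + (m * x) * Complex.I := by
    push_cast; ring
  have hminus : ((N - m : ℕ) : ℂ) * (x * Complex.I) = N * x * Complex.I + (-(m * x)) * Complex.I := by
    rw [Nat.cast_sub hm]; ring
  rw [hplus, hminus, Complex.exp_add, Complex.exp_add]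
  simp only [Complex.exp_mul_I, Complex.cos_neg, Complex.sin_neg]
  linear_combination ((Complex.cos (N * x) + Complex.sin (N * x) * Complex.I)
    * (-(b m : ℂ) * Complex.sin (m * x))) * Complex.I_sq

theorem card_le_of_trigPoly_eq_zero (hT : trigPoly N a b ≠ 0) {c : ℝ} {s : Finset ℝ}
    (hs : ↑s ⊆ Set.Ico c (c + 2 * π)) (hzero : ∀ x ∈ s, trigPoly N a b x = 0) :
    #s ≤ 2 * N := by
  set Q := trigPoly.toPolynomial N a b with hQdef
  have hQ : Q ≠ 0 := by
    refine fun hQ => hT (funext fun x => ?_)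
    have := trigPoly.eval_toPolynomial a b x
    rw [← hQdef, hQ, eval_zero, eq_comm, mul_eq_zero] at this
    exact_mod_cast this.resolve_left (Complex.exp_ne_zero _)
  have hinj : Set.InjOn (fun x : ℝ => (Circle.exp x : ℂ)) s :=
    (Subtype.val_injective.comp_injOn (Circle.exp_injOn_Ico (by linarith))).mono hs
  have hroots : s.image (fun x : ℝ => (Circle.exp x : ℂ)) ⊆ Q.roots.toFinset := by
    simp only [image_subset_iff, Multiset.mem_toFinset, mem_roots hQ,
      IsRoot, Circle.coe_exp]
    intro x hx
    rw [trigPoly.eval_toPolynomial, hzero x hx, Complex.ofReal_zero, mul_zero]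
  calc #s = #(s.image fun x : ℝ => (Circle.exp x : ℂ)) := (card_image_of_injOn hinj).symm
    _ ≤ #Q.roots.toFinset := card_le_card hroots
    _ ≤ Multiset.card Q.roots := Multiset.toFinset_card_le _
    _ ≤ Q.natDegree := card_roots' _
    _ ≤ 2 * N := trigPoly.natDegree_toPolynomial_le a b

end TrigPoly

theorem exists_mem_Ioo_eq_zero_of_mul_neg {f : ℝ → ℝ} (hf : Continuous f) {u v : ℝ}
    (huv : u ≤ v) (h : f u * f v < 0) : ∃ x ∈ Set.Ioo u v, f x = 0 := by
  rcases mul_neg_iff.mp h with ⟨hu, hv⟩ | ⟨hu, hv⟩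
  · exact intermediate_value_Ioo' huv hf.continuousOn ⟨hv, hu⟩
  · exact intermediate_value_Ioo huv hf.continuousOn ⟨hu, hv⟩

theorem exists_finset_zeros_of_alternating {f : ℝ → ℝ} (hf : Continuous f) {y : ℕ → ℝ}
    (hy : StrictMono y) (K : ℕ) (hsign : ∀ j ≤ K, 0 < (-1) ^ j * f (y j)) :
    ∃ s : Finset ℝ, #s = K ∧ ↑s ⊆ Set.Ioo (y 0) (y K) ∧ ∀ x ∈ s, f x = 0 := by
  induction K with
  | zero => exact ⟨∅, by simp⟩
  | succ K ih =>
    obtain ⟨s, hcard, hsub, hzero⟩ := ih fun j hj => hsign j (by omega)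
    have hchange : f (y K) * f (y (K + 1)) < 0 := by
      have hsq : ((-1 : ℝ) ^ K) ^ 2 = 1 := by rw [← pow_mul]; exact Even.neg_one_pow ⟨K, by ring⟩
      have hprod : f (y K) * f (y (K + 1))
          = -(((-1) ^ K * f (y K)) * ((-1) ^ (K + 1) * f (y (K + 1)))) := by
        rw [pow_succ]; linear_combination (-(f (y K) * f (y (K + 1)))) * hsq
      rw [hprod]
      exact neg_neg_of_pos (mul_pos (hsign K (by omega)) (hsign (K + 1) le_rfl))
    obtain ⟨w, hw, hfw⟩ :=
      exists_mem_Ioo_eq_zero_of_mul_neg hf (hy K.lt_succ_self).le hchange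
    have hws : w ∉ s := fun h => (hsub h).2.not_gt hw.1
    refine ⟨insert w s, by rw [card_insert_of_notMem hws, hcard], ?_, ?_⟩
    · rw [coe_insert, Set.insert_subset_iff]
      refine ⟨⟨(hy.monotone K.zero_le).trans_lt hw.1, hw.2⟩, ?_⟩
      exact hsub.trans (Set.Ioo_subset_Ioo_right (hy K.lt_succ_self).le)
    · simpa [hfw] using hzero

theorem HasDerivAt.exists_mem_Ioo_lt {g : ℝ → ℝ} {g' ξ u : ℝ} (hg : HasDerivAt g g' ξ)
    (hg' : 0 < g') (hu : ξ < u) : ∃ t ∈ Set.Ioo ξ u, g ξ < g t := by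
  have hslope : ∀ᶠ h in nhdsWithin 0 (Set.Ioi 0), 0 < h⁻¹ • (g (ξ + h) - g ξ) :=
    hg.tendsto_slope_zero_right.eventually (lt_mem_nhds hg')
  obtain ⟨h, hslope, hh⟩ := (hslope.and (Ioo_mem_nhdsGT (sub_pos.2 hu))).exists
  refine ⟨ξ + h, ⟨by linarith [hh.1], by linarith [hh.2]⟩, ?_⟩
  rw [smul_eq_mul] at hslope
  linarith [(pos_iff_pos_of_mul_pos hslope).1 (inv_pos.2 hh.1)]

section Bernstein

variable {N : ℕ} (a b : Fin (N + 1) → ℝ)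

theorem trigPoly_ne_zero_of_alternating {ξ : ℝ} {y : ℕ → ℝ} (hy : StrictMono y)
    (hξ : ξ < y 0) (hy2N : y (2 * N) < ξ + 2 * π)
    (hsign : ∀ j ≤ 2 * N, 0 < (-1) ^ j * trigPoly N a b (y j)) : trigPoly N a b ξ ≠ 0 := by
  intro hξzero
  obtain ⟨s, hcard, hsub, hzero⟩ := exists_finset_zeros_of_alternating
    (differentiable_trigPoly a b).continuous hy (2 * N) hsign
  have hξs : ξ ∉ s := fun h => (hsub h).1.not_gt hξ
  have hT : trigPoly N a b ≠ 0 := fun h => (hsign 0 (Nat.zero_le _)).ne' (by simp [h])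
  have hcard_le := card_le_of_trigPoly_eq_zero a b hT (c := ξ) (s := insert ξ s) ?_ ?_
  · rw [card_insert_of_notMem hξs, hcard] at hcard_le
    omega
  · rw [coe_insert, Set.insert_subset_iff]
    exact ⟨⟨le_rfl, by linarith [pi_pos]⟩,
      fun x hx => ⟨(hξ.trans (hsub hx).1).le, (hsub hx).2.trans hy2N⟩⟩
  · simpa [hξzero] using hzero

theorem deriv_trigPoly_nonpos_of_alternating (hN : 0 < N) {ξ α : ℝ} (hα₁ : -(π / 2) < α)
    (hα₂ : α < π / 2) (hξ : trigPoly N a b ξ = 0)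
    (hsign : ∀ j : ℕ, 0 < (-1) ^ j * trigPoly N a b (ξ + (j * π - π / 2 - α) / N)) :
    deriv (trigPoly N a b) ξ ≤ 0 := by
  by_contra! hpos
  have hN' : (0 : ℝ) < N := by exact_mod_cast hN
  set y : ℕ → ℝ := fun j => ξ + (j * π - π / 2 - α) / N
  have hy_succ : ∀ j, y (j + 1) = y j + π / N := fun j => by
    simp only [y]; push_cast; ring
  have hy₁ : ξ < y 1 := by
    have : y 1 = ξ + (π / 2 - α) / N := by simp only [y]; ring
    rw [this, lt_add_iff_pos_right]
    exact div_pos (by linarith) hN'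
  obtain ⟨t, ht, hgt⟩ := (differentiable_trigPoly a b ξ).hasDerivAt.exists_mem_Ioo_lt hpos hy₁
  refine trigPoly_ne_zero_of_alternating a b (y := fun j => if j = 0 then t else y j)
    (strictMono_nat_of_lt_succ fun j => ?_) ht.1 ?_ (fun j _ => ?_) hξ
  · rcases j with _ | j
    · simpa using ht.2
    · simp only [add_eq_zero, one_ne_zero, and_false, if_false, hy_succ]
      exact lt_add_of_pos_right _ (div_pos pi_pos hN')
  · simp only [show 2 * N ≠ 0 by omega, if_false, y]
    rw [← sub_lt_iff_lt_add', add_sub_cancel_left, div_lt_iff₀ hN']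
    push_cast
    linarith
  · rcases j with _ | j
    · simpa [hξ] using hgt
    · exact hsign (j + 1)

/-- Compare `T = trigPoly N a b` with the sinusoid `S x = B sin (N (x - ξ) + α)` that agrees
with it at `ξ`: as `|T| < B`, the difference `T - S` (again of degree `N`) alternates in sign at
the extrema of `S`, which forces `T' ξ ≤ S' ξ ≤ N B`. -/
theorem deriv_trigPoly_le_of_abs_lt (hN : 0 < N) {B : ℝ} (hB : ∀ x, |trigPoly N a b x| < B)
    (ξ : ℝ) : deriv (trigPoly N a b) ξ ≤ N * B := by
  have hN' : (0 : ℝ) < N := by exact_mod_cast hN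
  obtain ⟨hlo, hhi⟩ := abs_lt.mp (hB ξ)
  have hB0 : 0 < B := by linarith
  set α := arcsin (trigPoly N a b ξ / B)
  have hα₁ : -(π / 2) < α := neg_pi_div_two_lt_arcsin.2 (by rw [lt_div_iff₀ hB0]; linarith)
  have hα₂ : α < π / 2 := arcsin_lt_pi_div_two.2 (by rwa [div_lt_one hB0])
  have hsinα : B * sin α = trigPoly N a b ξ := by
    rw [sin_arcsin (by rw [le_div_iff₀ hB0]; linarith) (by rw [div_le_one hB0]; linarith)]
    field_simp
  set φ := α - N * ξ
  set g := trigPoly N (a - Pi.single (Fin.last N) (B * sin φ))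
    (b - Pi.single (Fin.last N) (B * cos φ))
  have hg : ∀ x, g x = trigPoly N a b x - B * sin (N * (x - ξ) + α) := fun x => by
    simp only [g]
    rw [trigPoly_sub_single, show (N : ℝ) * (x - ξ) + α = N * x + φ by ring, sin_add]
    ring
  have hg' : HasDerivAt g (deriv (trigPoly N a b) ξ - B * (cos α * N)) ξ := by
    have hlin : HasDerivAt (fun x : ℝ => N * (x - ξ) + α) N ξ := by
      simpa using (((hasDerivAt_id ξ).sub_const ξ).const_mul (N : ℝ)).add_const α
    have hS := ((hasDerivAt_sin _).comp ξ hlin).const_mul B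
    rw [show (N : ℝ) * (ξ - ξ) + α = α by ring] at hS
    rw [show g = fun x => trigPoly N a b x - B * sin (N * (x - ξ) + α) from funext hg]
    exact (differentiable_trigPoly a b ξ).hasDerivAt.sub hS
  have hgξ : g ξ = 0 := by rw [hg, sub_self, mul_zero, zero_add, hsinα, sub_self]
  have hsign : ∀ j : ℕ, 0 < (-1) ^ j * g (ξ + (j * π - π / 2 - α) / N) := fun j => by
    have hphase : (N : ℝ) * (ξ + (j * π - π / 2 - α) / N - ξ) + α = -(π / 2) + j * π := by
      field_simp; ring
    rw [hg, hphase, sin_add_nat_mul_pi, sin_neg, sin_pi_div_two]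
    obtain ⟨hlo, hhi⟩ := abs_lt.mp (hB (ξ + (j * π - π / 2 - α) / N))
    rcases neg_one_pow_eq_or ℝ j with h | h <;> rw [h] <;> linarith
  have hderiv := deriv_trigPoly_nonpos_of_alternating _ _ hN hα₁ hα₂ hgξ hsign
  rw [hg'.deriv] at hderiv
  nlinarith [mul_le_mul_of_nonneg_left (cos_le_one α) (mul_pos hB0 hN').le]

end Bernstein

theorem abs_deriv_trigPoly_le {N : ℕ} (hN : 0 < N) (a b : Fin (N + 1) → ℝ) {B : ℝ}
    (hB : ∀ x, |trigPoly N a b x| ≤ B) (ξ : ℝ) : |deriv (trigPoly N a b) ξ| ≤ N * B := by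
  have hN' : (0 : ℝ) < N := by exact_mod_cast hN
  have hle : ∀ a b : Fin (N + 1) → ℝ, (∀ x, |trigPoly N a b x| ≤ B) →
      deriv (trigPoly N a b) ξ ≤ N * B := fun a b hB => by
    refine le_of_forall_pos_le_add fun ε hε => ?_
    have hlt : ∀ x, |trigPoly N a b x| < B + ε / N :=
      fun x => (hB x).trans_lt (lt_add_of_pos_right B (div_pos hε hN'))
    simpa [mul_add, mul_div_cancel₀ ε hN'.ne'] using deriv_trigPoly_le_of_abs_lt a b hN hlt ξ
  have hneg := hle (-a) (-b) (by simpa [trigPoly_neg] using hB)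
  rw [trigPoly_neg, deriv.neg] at hneg
  exact abs_le.2 ⟨by linarith, hle a b hB⟩

theorem P_eq_trigPoly (n : ℕ) (ω : Fin (n + 1) → Bool) :
    P n ω = trigPoly n (fun m => n.choose m * eps ω m) 0 :=
  funext fun _ => sum_congr rfl fun _ _ => by simp only [Pi.zero_apply]; ring

theorem differentiable_P (n : ℕ) (ω : Fin (n + 1) → Bool) : Differentiable ℝ (P n ω) :=
  P_eq_trigPoly n ω ▸ differentiable_trigPoly _ _

theorem Function.Periodic.exists_abs_eq_iSup_Icc {f : ℝ → ℝ} {T : ℝ} (hf : Continuous f)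
    (hper : Function.Periodic f T) (hT : 0 < T) :
    ∃ x₀, ⨆ x : Set.Icc 0 T, |f x| = |f x₀| ∧ ∀ x, |f x| ≤ |f x₀| := by
  have hne : (Set.Icc 0 T).Nonempty := Set.nonempty_Icc.2 hT.le
  have := hne.to_subtype
  obtain ⟨x₀, hx₀, hmax⟩ := isCompact_Icc.exists_isMaxOn hne (continuous_abs.comp hf).continuousOn
  have hbound : ∀ x, |f x| ≤ |f x₀| := fun x => by
    obtain ⟨y, hy, hxy⟩ := hper.exists_mem_Ico₀ hT x
    rw [hxy]
    exact hmax ⟨hy.1, hy.2.le⟩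
  refine ⟨x₀, le_antisymm (ciSup_le fun x => hbound x) ?_, hbound⟩
  exact le_ciSup (f := fun x : Set.Icc 0 T => |f x|) ⟨|f x₀|, by
    rintro _ ⟨x, rfl⟩; exact hbound x⟩ ⟨x₀, hx₀⟩

theorem Function.Periodic.mul_le_intervalIntegral {f : ℝ → ℝ} {T : ℝ} (hf : Continuous f)
    (hper : Function.Periodic f T) (hf0 : 0 ≤ f) {x₀ δ c : ℝ} (hδ : 0 ≤ δ) (hδT : δ ≤ T)
    (hc : ∀ x ∈ Set.Icc x₀ (x₀ + δ), c ≤ f x) : δ * c ≤ ∫ x in 0..T, f x := by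
  calc δ * c = ∫ _ in x₀..x₀ + δ, c := by simp
    _ ≤ ∫ x in x₀..x₀ + δ, f x :=
      intervalIntegral.integral_mono_on (by linarith) intervalIntegrable_const
        (hf.intervalIntegrable _ _) hc
    _ ≤ ∫ x in x₀..x₀ + T, f x :=
      intervalIntegral.integral_mono_interval le_rfl (by linarith) (by linarith)
        (Eventually.of_forall hf0) (hf.intervalIntegrable _ _)
    _ = ∫ x in 0..T, f x := by simpa using hper.intervalIntegral_add_eq x₀ 0

theorem sub_mul_le_abs_of_abs_deriv_le {f : ℝ → ℝ} (hf : Differentiable ℝ f) {L : ℝ}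
    (hL : ∀ x, |deriv f x| ≤ L) {x₀ δ x : ℝ} (hx : x ∈ Set.Icc x₀ (x₀ + δ)) :
    |f x₀| - L * δ ≤ |f x| := by
  have hmvt := Convex.norm_image_sub_le_of_norm_deriv_le (fun y _ => hf y) (fun y _ => hL y)
    (convex_Icc x₀ (x₀ + δ)) (Set.left_mem_Icc.2 (hx.1.trans hx.2)) hx
  have hL0 : 0 ≤ L := (abs_nonneg _).trans (hL x₀)
  simp only [Real.norm_eq_abs, abs_of_nonneg (sub_nonneg.2 hx.1)] at hmvt
  have := abs_sub_abs_le_abs_sub (f x₀) (f x)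
  rw [abs_sub_comm] at this
  nlinarith [hx.2]

theorem exp_mul_M_le_integral {n : ℕ} (hn : 1 ≤ n) (ω : Fin (n + 1) → Bool) {l θ : ℝ}
    (hl : 0 < l) (hθ0 : 0 < θ) (hθ1 : θ < 1) :
    exp (θ * l * M n ω) ≤ n / (1 - θ) * ∫ x in 0..2 * π, exp (l * |P n ω x|) := by
  have hn' : (0 : ℝ) < n := by exact_mod_cast hn
  have hdiff := differentiable_P n ω
  have hper : Function.Periodic (P n ω) (2 * π) := P_eq_trigPoly n ω ▸ trigPoly_periodic _ _
  obtain ⟨x₀, hM, hmax⟩ := hper.exists_abs_eq_iSup_Icc hdiff.continuous two_pi_pos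
  change M n ω = _ at hM
  have hderiv : ∀ x, |deriv (P n ω) x| ≤ n * M n ω := by
    rw [P_eq_trigPoly]
    exact abs_deriv_trigPoly_le hn _ _ fun x => by rw [← P_eq_trigPoly, hM]; exact hmax x
  set δ := (1 - θ) / n
  have hnear : ∀ x ∈ Set.Icc x₀ (x₀ + δ), exp (θ * l * M n ω) ≤ exp (l * |P n ω x|) := by
    intro x hx
    have hbelow := sub_mul_le_abs_of_abs_deriv_le hdiff hderiv hx
    rw [← hM, show (n : ℝ) * M n ω * δ = (1 - θ) * M n ω by simp only [δ]; field_simp] at hbelow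
    rw [exp_le_exp]
    nlinarith
  have hδT : δ ≤ 2 * π := by
    rw [div_le_iff₀ hn']
    nlinarith [pi_gt_three, (Nat.one_le_cast (α := ℝ)).2 hn]
  have hintegral := (hper.comp fun p => exp (l * |p|)).mul_le_intervalIntegral
    (by have := hdiff.continuous; fun_prop)
    (fun x => (exp_pos _).le) (div_nonneg (by linarith) hn'.le) hδT hnear
  rw [div_mul_eq_mul_div, le_div_iff₀ (by linarith)]
  calc exp (θ * l * M n ω) * (1 - θ) = n * (δ * exp (θ * l * M n ω)) := by
        simp only [δ]; field_simp
    _ ≤ n * ∫ x in 0..2 * π, exp (l * |P n ω x|) := by gcongr; exact hintegral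

theorem sum_exp_sum_mul_sign_le {ι : Type*} [Fintype ι] [DecidableEq ι] (c : ι → ℝ) :
    ∑ ω : ι → Bool, exp (∑ i, c i * (if ω i then 1 else -1))
      ≤ 2 ^ Fintype.card ι * exp (∑ i, c i ^ 2 / 2) := by
  calc ∑ ω : ι → Bool, exp (∑ i, c i * (if ω i then 1 else -1))
      = ∏ i, ∑ s : Bool, exp (c i * (if s then 1 else -1)) := by
        simp only [Fintype.prod_sum, exp_sum]
    _ = ∏ i, 2 * cosh (c i) := by
        refine prod_congr rfl fun i _ => ?_
        simp only [Fintype.sum_bool, Bool.false_eq_true, if_true, if_false, mul_one, mul_neg, cosh_eq]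
        ring
    _ ≤ ∏ i, 2 * exp (c i ^ 2 / 2) :=
        prod_le_prod (fun i _ => by positivity) fun i _ => by gcongr; exact cosh_le_exp_half_sq _
    _ = 2 ^ Fintype.card ι * exp (∑ i, c i ^ 2 / 2) := by
        rw [prod_mul_distrib, prod_const, exp_sum, card_univ]

theorem sum_exp_mul_P_le (n : ℕ) (t x : ℝ) :
    ∑ ω : Fin (n + 1) → Bool, exp (t * P n ω x) ≤ 2 ^ (n + 1) * exp (t ^ 2 * R n / 2) := by
  have hP : ∀ ω, t * P n ω x = ∑ m : Fin (n + 1),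
      t * n.choose m * cos (m * x) * (if ω m then 1 else -1) := fun ω => by
    rw [P, mul_sum]
    exact sum_congr rfl fun m _ => by rw [eps]; ring
  simp only [hP]
  refine (sum_exp_sum_mul_sign_le _).trans ?_
  rw [Fintype.card_fin]
  gcongr
  rw [R, ← Fin.sum_univ_eq_sum_range, mul_sum, sum_div]
  gcongr with m
  rw [mul_pow, mul_pow]
  nlinarith [cos_sq_le_one (m * x), sq_nonneg (t * n.choose m)]

theorem sum_exp_mul_abs_P_le (n : ℕ) (l x : ℝ) :
    ∑ ω, exp (l * |P n ω x|) ≤ 2 ^ (n + 2) * exp (l ^ 2 * R n / 2) := by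
  have hsplit : ∀ ω, exp (l * |P n ω x|) ≤ exp (l * P n ω x) + exp (-l * P n ω x) := fun ω => by
    rcases abs_cases (P n ω x) with ⟨h, _⟩ | ⟨h, _⟩ <;> rw [h]
    · linarith [exp_pos (-l * P n ω x)]
    · rw [mul_neg, ← neg_mul]; linarith [exp_pos (l * P n ω x)]
  calc ∑ ω, exp (l * |P n ω x|) ≤ ∑ ω, exp (l * P n ω x) + ∑ ω, exp (-l * P n ω x) := by
        rw [← sum_add_distrib]; exact sum_le_sum fun ω _ => hsplit ω
    _ ≤ 2 ^ (n + 1) * exp (l ^ 2 * R n / 2) + 2 ^ (n + 1) * exp ((-l) ^ 2 * R n / 2) :=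
        add_le_add (sum_exp_mul_P_le n l x) (sum_exp_mul_P_le n (-l) x)
    _ = 2 ^ (n + 2) * exp (l ^ 2 * R n / 2) := by rw [neg_sq]; ring

theorem integral_signs (n : ℕ) (f : (Fin (n + 1) → Bool) → ℝ) :
    ∫ ω, f ω ∂signs n = (2 ^ (n + 1))⁻¹ * ∑ ω, f ω := by
  rw [signs, PMF.integral_eq_sum, mul_sum]
  refine sum_congr rfl fun ω _ => ?_
  simp [PMF.uniformOfFintype_apply]

theorem integral_sum_exp_mul_abs_P_le (n : ℕ) (l : ℝ) :
    ∫ x in 0..2 * π, ∑ ω, exp (l * |P n ω x|) ≤ 2 * π * (2 ^ (n + 2) * exp (l ^ 2 * R n / 2)) := by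
  have hcont : Continuous fun x => ∑ ω, exp (l * |P n ω x|) := by
    have := fun ω => (differentiable_P n ω).continuous
    fun_prop
  refine (intervalIntegral.integral_mono_on two_pi_pos.le (hcont.intervalIntegrable _ _)
    intervalIntegrable_const fun x _ => sum_exp_mul_abs_P_le n l x).trans_eq ?_
  rw [intervalIntegral.integral_const, smul_eq_mul, sub_zero]

theorem stmt18 (n : ℕ) (hn : 1 ≤ n) (l θ : ℝ) (hl : 0 < l) (hθ0 : 0 < θ) (hθ1 : θ < 1) :
    (∫ ω, Real.exp (θ * l * M n ω) ∂(signs n))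
      ≤ 4 * π / (1 - θ) * n * Real.exp (1/2 * l^2 * R n) := by
  have hint : ∀ ω, IntervalIntegrable (fun x => exp (l * |P n ω x|)) volume 0 (2 * π) :=
    fun ω => ((differentiable_P n ω).continuous.abs.const_mul l).rexp.intervalIntegrable _ _
  rw [integral_signs]
  calc (2 ^ (n + 1))⁻¹ * ∑ ω, exp (θ * l * M n ω)
      ≤ (2 ^ (n + 1))⁻¹ * ∑ ω, n / (1 - θ) * ∫ x in 0..2 * π, exp (l * |P n ω x|) := by
        gcongr with ω
        exact exp_mul_M_le_integral hn ω hl hθ0 hθ1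
    _ = (2 ^ (n + 1))⁻¹ * (n / (1 - θ)) * ∫ x in 0..2 * π, ∑ ω, exp (l * |P n ω x|) := by
        rw [intervalIntegral.integral_finsetSum fun ω _ => hint ω, ← mul_sum, mul_assoc]
    _ ≤ (2 ^ (n + 1))⁻¹ * (n / (1 - θ)) * (2 * π * (2 ^ (n + 2) * exp (l ^ 2 * R n / 2))) := by
        gcongr
        exact integral_sum_exp_mul_abs_P_le n l
    _ = 4 * π / (1 - θ) * n * exp (1 / 2 * l ^ 2 * R n) := by
        rw [show l ^ 2 * R n / 2 = 1 / 2 * l ^ 2 * R n by ring, pow_succ 2 (n + 1)]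
        field_simp
        norm_num
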